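/- arXiv:1103.2371 — 4 statements merged into one kernel-verified Lean document; each statement's English description precedes it below -/
import Mathlib

section
/- If g(t,x) : ℝ × X → Y is almost periodic in t uniformly for x in compact subsets of X, and y : ℝ → X is almost periodic, then t ↦ g(t, y(t)) is an almost periodic function with values in Y. -/
open MeasureTheory

def AlmostPeriodic {X : Type*} [NormedAddCommGroup X] (g : ℝ → X) : Prop :=
  Continuous g ∧ ∀ δ : ℝ, 0 < δ → ∃ l : ℝ, 0 < l ∧ ∀ a : ℝ,
    ∃ s ∈ Set.Icc a (a + l), ∀ t : ℝ, ‖g (t + s) - g t‖ < δ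

/-- `g(t,x)` is almost periodic in `t` uniformly for `x` in compact subsets of `X`. -/
def UniformlyAlmostPeriodic {X Y : Type*} [NormedAddCommGroup X] [NormedAddCommGroup Y]
    (g : ℝ → X → Y) : Prop :=
  Continuous (fun p : ℝ × X => g p.1 p.2) ∧
  ∀ δ : ℝ, 0 < δ → ∀ K : Set X, IsCompact K → ∃ l : ℝ, 0 < l ∧ ∀ a : ℝ,
    ∃ s ∈ Set.Icc a (a + l), ∀ t : ℝ, ∀ x ∈ K, ‖g (t + s) x - g t x‖ < δ

section Aux
variable {X Y : Type*} [NormedAddCommGroup X] [NormedAddCommGroup Y]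


/-- L1: range of an a.p. function is totally bounded. -/
lemma ap_range_totallyBounded (y : ℝ → X) (hy : AlmostPeriodic y) :
    TotallyBounded (Set.range y) := by
  rw [Metric.totallyBounded_iff]
  intro ε hε
  obtain ⟨l, hl, hT⟩ := hy.2 (ε / 2) (by linarith)
  have hcomp : IsCompact (y '' Set.Icc 0 l) := (isCompact_Icc).image hy.1
  obtain ⟨F, hF, hcov⟩ := (Metric.totallyBounded_iff.mp hcomp.totallyBounded) (ε / 2)
    (by linarith)
  refine ⟨F, hF, ?_⟩
  rintro _ ⟨u, rfl⟩
  obtain ⟨s, hs, hsT⟩ := hT (-u)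
  have hmem : y (u + s) ∈ y '' Set.Icc 0 l := by
    refine ⟨u + s, ⟨by linarith [hs.1], by linarith [hs.2]⟩, rfl⟩
  obtain ⟨c, hcF, hc⟩ := Set.mem_iUnion₂.mp (hcov hmem)
  refine Set.mem_iUnion₂.mpr ⟨c, hcF, ?_⟩
  have h1 : dist (y u) (y (u + s)) < ε / 2 := by
    rw [dist_eq_norm, norm_sub_rev]; exact hsT u
  have h2 : dist (y (u + s)) c < ε / 2 := hc
  exact Metric.mem_ball.mpr (lt_of_le_of_lt (dist_triangle _ _ _) (by linarith))

/-- uniform continuity of an a.p. function. -/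
lemma ap_uniformContinuous (y : ℝ → X) (hy : AlmostPeriodic y) {ε : ℝ} (hε : 0 < ε) :
    ∃ η > 0, η ≤ 1 ∧ ∀ t t' : ℝ, |t - t'| < η → ‖y t - y t'‖ < ε := by
  obtain ⟨l, hl, hT⟩ := hy.2 (ε / 3) (by linarith)
  have hcomp : IsCompact (Set.Icc (-1 : ℝ) (l + 1)) := isCompact_Icc
  have huc : UniformContinuousOn y (Set.Icc (-1 : ℝ) (l + 1)) :=
    hcomp.uniformContinuousOn_of_continuous hy.1.continuousOn
  rw [Metric.uniformContinuousOn_iff] at huc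
  obtain ⟨η, hη, hucη⟩ := huc (ε / 3) (by linarith)
  refine ⟨min η 1, lt_min hη one_pos, min_le_right _ _, ?_⟩
  intro t t' htt'
  obtain ⟨s, hs, hsT⟩ := hT (-t)
  have ht1 : t + s ∈ Set.Icc (-1 : ℝ) (l + 1) := ⟨by linarith [hs.1], by linarith [hs.2]⟩
  have ht2 : t' + s ∈ Set.Icc (-1 : ℝ) (l + 1) := by
    have h1 := abs_lt.mp (lt_of_lt_of_le htt' (min_le_right _ _))
    constructor <;> [linarith [hs.1]; linarith [hs.2]]
  have hd : dist (t + s) (t' + s) < η := by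
    rw [Real.dist_eq]
    have : t + s - (t' + s) = t - t' := by ring
    rw [this]
    exact lt_of_lt_of_le htt' (min_le_left _ _)
  have hmid : ‖y (t + s) - y (t' + s)‖ < ε / 3 := by
    have := hucη _ ht1 _ ht2 hd
    rwa [dist_eq_norm] at this
  calc ‖y t - y t'‖ ≤ ‖y t - y (t + s)‖ + ‖y (t + s) - y (t' + s)‖ + ‖y (t' + s) - y t'‖ := by
        have := norm_sub_le_norm_sub_add_norm_sub (y t) (y (t + s)) (y t')
        have := norm_sub_le_norm_sub_add_norm_sub (y (t + s)) (y (t' + s)) (y t')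
        linarith
    _ < ε / 3 + ε / 3 + ε / 3 := by
        refine add_lt_add (add_lt_add ?_ hmid) ?_
        · rw [norm_sub_rev]; exact hsT t
        · exact hsT t'
    _ = ε := by ring


/-- joint uniform continuity of g on ℝ × K, uniformly in t. -/
lemma uap_uniformContinuous (g : ℝ → X → Y) (hg : UniformlyAlmostPeriodic g)
    {K : Set X} (hK : IsCompact K) {ε : ℝ} (hε : 0 < ε) :
    ∃ η > 0, ∀ t t' : ℝ, |t - t'| < η → ∀ x ∈ K, ∀ x' ∈ K, ‖x - x'‖ < η →
      ‖g t x - g t' x'‖ < ε := by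
  obtain ⟨l, hl, hT⟩ := hg.2 (ε / 3) (by linarith) K hK
  have hcomp : IsCompact ((Set.Icc (-1 : ℝ) (l + 1)) ×ˢ K) := isCompact_Icc.prod hK
  have huc : UniformContinuousOn (fun p : ℝ × X => g p.1 p.2)
      ((Set.Icc (-1 : ℝ) (l + 1)) ×ˢ K) :=
    hcomp.uniformContinuousOn_of_continuous hg.1.continuousOn
  rw [Metric.uniformContinuousOn_iff] at huc
  obtain ⟨η, hη, hucη⟩ := huc (ε / 3) (by linarith)
  refine ⟨min η 1, lt_min hη one_pos, ?_⟩
  intro t t' htt' x hx x' hx' hxx'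
  obtain ⟨s, hs, hsT⟩ := hT (-t)
  have ht1 : ((t + s, x) : ℝ × X) ∈ (Set.Icc (-1 : ℝ) (l + 1)) ×ˢ K :=
    ⟨⟨show (-1:ℝ) ≤ t + s by linarith [hs.1], show t + s ≤ l + 1 by linarith [hs.2]⟩, hx⟩
  have ht2 : ((t' + s, x') : ℝ × X) ∈ (Set.Icc (-1 : ℝ) (l + 1)) ×ˢ K := by
    have h1 := abs_lt.mp (lt_of_lt_of_le htt' (min_le_right _ _))
    exact ⟨⟨show (-1:ℝ) ≤ t' + s by linarith [hs.1], show t' + s ≤ l + 1 by linarith [hs.2]⟩, hx'⟩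
  have hd : dist ((t + s, x) : ℝ × X) ((t' + s, x') : ℝ × X) < η := by
    rw [Prod.dist_eq]
    apply max_lt
    · rw [Real.dist_eq]
      have : t + s - (t' + s) = t - t' := by ring
      rw [this]
      exact lt_of_lt_of_le htt' (min_le_left _ _)
    · rw [dist_eq_norm]
      exact lt_of_lt_of_le hxx' (min_le_left _ _)
  have hmid : ‖g (t + s) x - g (t' + s) x'‖ < ε / 3 := by
    have := hucη _ ht1 _ ht2 hd
    rwa [dist_eq_norm] at this
  calc ‖g t x - g t' x'‖
      ≤ ‖g t x - g (t + s) x‖ + ‖g (t + s) x - g (t' + s) x'‖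
        + ‖g (t' + s) x' - g t' x'‖ := by
        have := norm_sub_le_norm_sub_add_norm_sub (g t x) (g (t + s) x) (g t' x')
        have := norm_sub_le_norm_sub_add_norm_sub (g (t + s) x) (g (t' + s) x') (g t' x')
        linarith
    _ < ε / 3 + ε / 3 + ε / 3 := by
        refine add_lt_add (add_lt_add ?_ hmid) (hsT t' x' hx')
        rw [norm_sub_rev]; exact hsT t x hx
    _ = ε := by ring


/-- `s` is a common `ε`-translation number for `g` (on `K`) and `y`. -/
def IsCommonTrans (g : ℝ → X → Y) (y : ℝ → X) (K : Set X) (ε s : ℝ) : Prop :=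
  (∀ t : ℝ, ∀ x ∈ K, ‖g (t + s) x - g t x‖ < ε) ∧ (∀ t : ℝ, ‖y (t + s) - y t‖ < ε)



/-- L4: pigeonhole / total boundedness of combined translates. -/
lemma uap_pigeonhole (g : ℝ → X → Y) (y : ℝ → X) (hg : UniformlyAlmostPeriodic g)
    (hy : AlmostPeriodic y) {K : Set X} (hK : IsCompact K) {ε : ℝ} (hε : 0 < ε) :
    ∃ N : ℕ, ∀ u : Fin (N + 1) → ℝ, ∃ i j : Fin (N + 1), i ≠ j ∧
      (∀ t : ℝ, ∀ x ∈ K, ‖g (t + u i) x - g (t + u j) x‖ < ε) ∧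
      (∀ t : ℝ, ‖y (t + u i) - y (t + u j)‖ < ε) := by
  obtain ⟨lg, hlg, hTg⟩ := hg.2 (ε / 4) (by linarith) K hK
  obtain ⟨ly, hly, hTy⟩ := hy.2 (ε / 4) (by linarith)
  set l : ℝ := max lg ly with hl
  -- choice of representative in [0, l] for g-translates
  have Hg : ∀ s : ℝ, ∃ τ, τ ∈ Set.Icc (0:ℝ) l ∧
      ∀ t : ℝ, ∀ x ∈ K, ‖g (t + τ) x - g (t + s) x‖ < ε / 4 := by
    intro s
    obtain ⟨σ, hσ, hσT⟩ := hTg (-s)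
    refine ⟨s + σ, ⟨by linarith [hσ.1], ?_⟩, ?_⟩
    · have := hσ.2
      have h2 : lg ≤ l := le_max_left _ _
      linarith
    · intro t x hx
      have := hσT (t + s) x hx
      have e : t + s + σ = t + (s + σ) := by ring
      rwa [e] at this
  have Hy : ∀ s : ℝ, ∃ τ, τ ∈ Set.Icc (0:ℝ) l ∧
      ∀ t : ℝ, ‖y (t + τ) - y (t + s)‖ < ε / 4 := by
    intro s
    obtain ⟨σ, hσ, hσT⟩ := hTy (-s)
    refine ⟨s + σ, ⟨by linarith [hσ.1], ?_⟩, ?_⟩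
    · have := hσ.2
      have h2 : ly ≤ l := le_max_right _ _
      linarith
    · intro t
      have := hσT (t + s)
      have e : t + s + σ = t + (s + σ) := by ring
      rwa [e] at this
  choose τg hτgmem hτgT using Hg
  choose τy hτymem hτyT using Hy
  obtain ⟨ηg, hηg, hucg⟩ := uap_uniformContinuous g hg hK (show (0:ℝ) < ε / 4 by linarith)
  obtain ⟨ηy, hηy, _, hucy⟩ := ap_uniformContinuous y hy (show (0:ℝ) < ε / 4 by linarith)
  set η : ℝ := min ηg ηy with hηdef
  have hη : 0 < η := lt_min hηg hηy
  obtain ⟨F, hFfin, hFcov⟩ := Metric.totallyBounded_iff.mp (totallyBounded_Icc (0:ℝ) l)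
    (η / 2) (by linarith)
  set Fs : Finset ℝ := hFfin.toFinset with hFs
  have pick : ∀ τ : ℝ, τ ∈ Set.Icc (0:ℝ) l → ∃ c : {x // x ∈ Fs}, dist τ (c : ℝ) < η / 2 := by
    intro τ hτ
    obtain ⟨c, hcF, hc⟩ := Set.mem_iUnion₂.mp (hFcov hτ)
    exact ⟨⟨c, hFfin.mem_toFinset.mpr hcF⟩, hc⟩
  choose pk hpk using pick
  refine ⟨Fs.card * Fs.card, ?_⟩
  intro u
  set f : Fin (Fs.card * Fs.card + 1) → ({x // x ∈ Fs} × {x // x ∈ Fs}) :=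
    fun i => (pk (τg (u i)) (hτgmem (u i)), pk (τy (u i)) (hτymem (u i))) with hf
  have hcard : Fintype.card ({x // x ∈ Fs} × {x // x ∈ Fs}) <
      Fintype.card (Fin (Fs.card * Fs.card + 1)) := by
    simp [Fintype.card_prod]
  obtain ⟨i, j, hij, hfij⟩ := Fintype.exists_ne_map_eq_of_card_lt f hcard
  have hg1 : |τg (u i) - τg (u j)| < η := by
    have h1 := hpk (τg (u i)) (hτgmem (u i))
    have h2 := hpk (τg (u j)) (hτgmem (u j))
    have he : (pk (τg (u i)) (hτgmem (u i)) : ℝ) = (pk (τg (u j)) (hτgmem (u j)) : ℝ) := by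
      have := congrArg Prod.fst hfij
      simp only [hf] at this
      exact congrArg Subtype.val this
    rw [← Real.dist_eq]
    calc dist (τg (u i)) (τg (u j)) ≤ dist (τg (u i)) (pk (τg (u i)) (hτgmem (u i)) : ℝ)
          + dist (pk (τg (u j)) (hτgmem (u j)) : ℝ) (τg (u j)) := by
          rw [he]; exact dist_triangle _ _ _
      _ < η / 2 + η / 2 := add_lt_add h1 (by rw [dist_comm]; exact h2)
      _ = η := by ring
  have hy1 : |τy (u i) - τy (u j)| < η := by
    have h1 := hpk (τy (u i)) (hτymem (u i))
    have h2 := hpk (τy (u j)) (hτymem (u j))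
    have he : (pk (τy (u i)) (hτymem (u i)) : ℝ) = (pk (τy (u j)) (hτymem (u j)) : ℝ) := by
      have := congrArg Prod.snd hfij
      simp only [hf] at this
      exact congrArg Subtype.val this
    rw [← Real.dist_eq]
    calc dist (τy (u i)) (τy (u j)) ≤ dist (τy (u i)) (pk (τy (u i)) (hτymem (u i)) : ℝ)
          + dist (pk (τy (u j)) (hτymem (u j)) : ℝ) (τy (u j)) := by
          rw [he]; exact dist_triangle _ _ _
      _ < η / 2 + η / 2 := add_lt_add h1 (by rw [dist_comm]; exact h2)
      _ = η := by ring
  refine ⟨i, j, hij, ?_, ?_⟩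
  · intro t x hx
    have h1 : ‖g (t + u i) x - g (t + τg (u i)) x‖ < ε / 4 := by
      rw [norm_sub_rev]; exact hτgT (u i) t x hx
    have h3 : ‖g (t + τg (u j)) x - g (t + u j) x‖ < ε / 4 := hτgT (u j) t x hx
    have h2 : ‖g (t + τg (u i)) x - g (t + τg (u j)) x‖ < ε / 4 := by
      apply hucg _ _ ?_ x hx x hx (by simpa using hη.trans_le (min_le_left _ _))
      · have : t + τg (u i) - (t + τg (u j)) = τg (u i) - τg (u j) := by ring
        rw [this]
        exact hg1.trans_le (min_le_left _ _)
    calc ‖g (t + u i) x - g (t + u j) x‖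
        ≤ ‖g (t + u i) x - g (t + τg (u i)) x‖ + ‖g (t + τg (u i)) x - g (t + τg (u j)) x‖
          + ‖g (t + τg (u j)) x - g (t + u j) x‖ := by
          have := norm_sub_le_norm_sub_add_norm_sub (g (t + u i) x) (g (t + τg (u i)) x)
            (g (t + u j) x)
          have := norm_sub_le_norm_sub_add_norm_sub (g (t + τg (u i)) x) (g (t + τg (u j)) x)
            (g (t + u j) x)
          linarith
      _ < ε / 4 + ε / 4 + ε / 4 := by linarith
      _ < ε := by linarith
  · intro t
    have h1 : ‖y (t + u i) - y (t + τy (u i))‖ < ε / 4 := by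
      rw [norm_sub_rev]; exact hτyT (u i) t
    have h3 : ‖y (t + τy (u j)) - y (t + u j)‖ < ε / 4 := hτyT (u j) t
    have h2 : ‖y (t + τy (u i)) - y (t + τy (u j))‖ < ε / 4 := by
      apply hucy
      have : t + τy (u i) - (t + τy (u j)) = τy (u i) - τy (u j) := by ring
      rw [this]
      exact hy1.trans_le (min_le_right _ _)
    calc ‖y (t + u i) - y (t + u j)‖
        ≤ ‖y (t + u i) - y (t + τy (u i))‖ + ‖y (t + τy (u i)) - y (t + τy (u j))‖
          + ‖y (t + τy (u j)) - y (t + u j)‖ := by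
          have := norm_sub_le_norm_sub_add_norm_sub (y (t + u i)) (y (t + τy (u i)))
            (y (t + u j))
          have := norm_sub_le_norm_sub_add_norm_sub (y (t + τy (u i))) (y (t + τy (u j)))
            (y (t + u j))
          linarith
      _ < ε / 4 + ε / 4 + ε / 4 := by linarith
      _ < ε := by linarith
/-- L5: common translation numbers are relatively dense. -/
lemma common_trans (g : ℝ → X → Y) (y : ℝ → X) (hg : UniformlyAlmostPeriodic g)
    (hy : AlmostPeriodic y) {K : Set X} (hK : IsCompact K) {ε : ℝ} (hε : 0 < ε) :
    ∃ l : ℝ, 0 < l ∧ ∀ a : ℝ, ∃ s ∈ Set.Icc a (a + l), IsCommonTrans g y K ε s := by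
  by_contra hcon
  push_neg at hcon
  have h : ∀ l : ℝ, 0 < l → ∃ a : ℝ, ∀ s ∈ Set.Icc a (a + l),
      ¬ IsCommonTrans g y K ε s := by
    intro l hl
    obtain ⟨a, ha⟩ := hcon l hl
    exact ⟨a, ha⟩
  -- build arbitrarily long sequences whose differences are not translation numbers
  have build : ∀ n : ℕ, ∃ u : ℕ → ℝ, ∀ i j : ℕ, i < j → j < n →
      ¬ IsCommonTrans g y K ε (u j - u i) := by
    intro n
    induction n with
    | zero => exact ⟨fun _ => 0, fun i j _ hj => absurd hj (Nat.not_lt_zero j)⟩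
    | succ n ih =>
      obtain ⟨u, hu⟩ := ih
      have hfin : ((fun i => |u i|) '' Set.Iio n).Finite := (Set.finite_Iio n).image _
      obtain ⟨C₀, hC₀⟩ := hfin.bddAbove
      set C : ℝ := max C₀ 0 + 1 with hCdef
      have hC : ∀ i < n, |u i| ≤ C := by
        intro i hi
        have := hC₀ (Set.mem_image_of_mem _ (Set.mem_Iio.mpr hi))
        have h2 : C₀ ≤ max C₀ 0 := le_max_left _ _
        simp only [hCdef]; linarith
      have hCpos : (0:ℝ) < C := by
        have := le_max_right C₀ 0; simp only [hCdef]; linarith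
      obtain ⟨a, ha⟩ := h (2 * C) (by linarith)
      set c : ℝ := a + C with hcdef
      refine ⟨Function.update u n c, ?_⟩
      intro i j hij hjn
      rcases Nat.lt_succ_iff_lt_or_eq.mp hjn with hj | hj
      · have hin : i ≠ n := by omega
        have hjn' : j ≠ n := by omega
        rw [Function.update_of_ne hjn', Function.update_of_ne hin]
        exact hu i j hij hj
      · subst hj
        have hin : i ≠ j := Nat.ne_of_lt hij
        rw [Function.update_self, Function.update_of_ne hin]
        apply ha
        have hiC := hC i hij
        have h1 := abs_le.mp hiC
        constructor
        · simp only [hcdef]; linarith [h1.2]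
        · simp only [hcdef]; linarith [h1.1]
  obtain ⟨N, hN⟩ := uap_pigeonhole g y hg hy hK hε
  obtain ⟨u, hu⟩ := build (N + 1)
  obtain ⟨i, j, hij, hQg, hQy⟩ := hN (fun k : Fin (N + 1) => u k)
  -- from closeness of translates we get a translation number, contradiction
  have key : ∀ p q : Fin (N + 1), (∀ t : ℝ, ∀ x ∈ K, ‖g (t + u p) x - g (t + u q) x‖ < ε) →
      (∀ t : ℝ, ‖y (t + u p) - y (t + u q)‖ < ε) →
      IsCommonTrans g y K ε (u p - u q) := by
    intro p q h1 h2
    constructor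
    · intro t x hx
      have := h1 (t - u q) x hx
      have e1 : t - u q + u p = t + (u p - u q) := by ring
      have e2 : t - u q + u q = t := by ring
      rwa [e1, e2] at this
    · intro t
      have := h2 (t - u q)
      have e1 : t - u q + u p = t + (u p - u q) := by ring
      have e2 : t - u q + u q = t := by ring
      rwa [e1, e2] at this
  rcases hij.lt_or_gt with hlt | hlt
  · -- i < j : u j - u i is a translation number
    have hT : IsCommonTrans g y K ε (u j - u i) := by
      apply key
      · intro t x hx; rw [norm_sub_rev]; exact hQg t x hx
      · intro t; rw [norm_sub_rev]; exact hQy t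
    exact hu i j (Fin.lt_iff_val_lt_val.mp hlt) (j.isLt) hT
  · have hT : IsCommonTrans g y K ε (u i - u j) := key i j hQg hQy
    exact hu j i (Fin.lt_iff_val_lt_val.mp hlt) (i.isLt) hT

end Aux

theorem almostPeriodic_eval {X Y : Type*} [NormedAddCommGroup X] [NormedSpace ℝ X]
    [CompleteSpace X] [NormedAddCommGroup Y] [NormedSpace ℝ Y] [CompleteSpace Y]
    (g : ℝ → X → Y) (y : ℝ → X) (hg : UniformlyAlmostPeriodic g)
    (hy : AlmostPeriodic y) : AlmostPeriodic (fun t => g t (y t)) := by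
  -- the closure of the range of y is compact
  set K : Set X := closure (Set.range y) with hKdef
  have hK : IsCompact K :=
    TotallyBounded.isCompact_of_isClosed
      ((ap_range_totallyBounded y hy).closure) isClosed_closure
  have hyK : ∀ t : ℝ, y t ∈ K := fun t => subset_closure (Set.mem_range_self t)
  constructor
  · exact hg.1.comp (continuous_id.prodMk hy.1)
  · intro δ hδ
    -- uniform continuity of g in x on K, uniformly in t
    obtain ⟨η, hη, hucg⟩ := uap_uniformContinuous g hg hK (show (0:ℝ) < δ / 2 by linarith)
    set ε : ℝ := min (δ / 2) η with hεdef
    have hε : 0 < ε := lt_min (by linarith) hη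
    obtain ⟨l, hl, hT⟩ := common_trans g y hg hy hK hε
    refine ⟨l, hl, ?_⟩
    intro a
    obtain ⟨s, hs, hTg, hTy⟩ := hT a
    refine ⟨s, hs, ?_⟩
    intro t
    have h1 : ‖g (t + s) (y (t + s)) - g t (y (t + s))‖ < ε :=
      hTg t (y (t + s)) (hyK (t + s))
    have h2 : ‖g t (y (t + s)) - g t (y t)‖ < δ / 2 := by
      apply hucg t t (by simpa using hη) (y (t + s)) (hyK (t + s)) (y t) (hyK t)
      exact lt_of_lt_of_le (hTy t) (min_le_right _ _)
    have h3 : ε ≤ δ / 2 := min_le_left _ _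
    calc ‖g (t + s) (y (t + s)) - g t (y t)‖
        ≤ ‖g (t + s) (y (t + s)) - g t (y (t + s))‖ + ‖g t (y (t + s)) - g t (y t)‖ :=
          norm_sub_le_norm_sub_add_norm_sub _ _ _
      _ < δ / 2 + δ / 2 := add_lt_add (h1.trans_le h3) h2
      _ = δ := by ring
end

section
/- Under exponential dichotomy estimates ‖e^{−A(t−s)}Px‖ ≤ M₁ e^{β(t−s)}‖x‖ (t < s) and ‖e^{−A(t−s)}(I−P)x‖ ≤ M₁ e^{−β(t−s)}(1 + (t−s)^{−α})‖x‖ (t > s), if φ : ℝ → X is bounded continuous and almost periodic, then the function F(t) = ∫_{−∞}^t e^{−A(t−s)}(I−P)φ(s) ds − ∫_t^∞ e^{−A(t−s)}Pφ(s) ds is almost periodic, with: for any δ-almost-period σ of φ, ‖F(t+σ) − F(t)‖ ≤ δ M₁ (2β^{−1} + β^{α−1}Γ(1−α)) for all t. -/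
/-!
Substituting `r = t - s` turns both integrals into integrals over the fixed half-lines `r > 0`
and `r < 0` of the kernels `T r ∘ (1 - P)` and `T r ∘ P` applied to `φ (t - r)`. The dichotomy
estimates bound the operator norms of these kernels by integrable weights of total mass
`M₁ (1/β + β^(α-1) Γ(1-α))` and `M₁/β`, so a `δ`-almost period of `φ` moves `F` by at most `δ`
times the sum of these masses; the same domination gives continuity of `F`.
-/

open MeasureTheory

open Set Real

theorem AlmostPeriodic.of_norm_shift_sub_le {X Y : Type*} [NormedAddCommGroup X]
    [NormedAddCommGroup Y] {f : ℝ → X} {g : ℝ → Y} (hf : AlmostPeriodic f) (hg : Continuous g)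
    {K : ℝ} (hK : 0 ≤ K)
    (h : ∀ δ σ : ℝ, (∀ t, ‖f (t + σ) - f t‖ ≤ δ) → ∀ t, ‖g (t + σ) - g t‖ ≤ δ * K) :
    AlmostPeriodic g := by
  refine ⟨hg, fun δ hδ => ?_⟩
  obtain ⟨l, hl, hfl⟩ := hf.2 (δ / (K + 1)) (by positivity)
  refine ⟨l, hl, fun a => ?_⟩
  obtain ⟨σ, hσ, hfσ⟩ := hfl a
  refine ⟨σ, hσ, fun t => ?_⟩
  calc ‖g (t + σ) - g t‖ ≤ δ / (K + 1) * K := h _ σ (fun t => (hfσ t).le) t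
    _ < δ := by rw [div_mul_eq_mul_div, div_lt_iff₀ (by positivity)]; nlinarith

section Reflection

variable {E : Type*} [NormedAddCommGroup E]

theorem integrableOn_Iic_iff_integrableOn_Ioi_sub (g : ℝ → ℝ → E) (t : ℝ) :
    IntegrableOn (fun s => g (t - s) s) (Iic t) ↔ IntegrableOn (fun r => g r (t - r)) (Ioi 0) := by
  have h := (Measure.measurePreserving_sub_left volume t).integrableOn_comp_preimage
    (MeasurableEquiv.subLeft t).measurableEmbedding (f := fun r => g r (t - r)) (s := Ioi 0)
  rw [preimage_const_sub_Ioi, sub_zero] at h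
  rw [integrableOn_Iic_iff_integrableOn_Iio]
  simpa only [Function.comp_def, sub_sub_cancel] using h

theorem integrableOn_Ici_iff_integrableOn_Iio_sub (g : ℝ → ℝ → E) (t : ℝ) :
    IntegrableOn (fun s => g (t - s) s) (Ici t) ↔ IntegrableOn (fun r => g r (t - r)) (Iio 0) := by
  have h := (Measure.measurePreserving_sub_left volume t).integrableOn_comp_preimage
    (MeasurableEquiv.subLeft t).measurableEmbedding (f := fun r => g r (t - r)) (s := Iio 0)
  rw [preimage_const_sub_Iio, sub_zero] at h
  rw [integrableOn_Ici_iff_integrableOn_Ioi]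
  simpa only [Function.comp_def, sub_sub_cancel] using h

variable [NormedSpace ℝ E]

theorem setIntegral_Iic_eq_setIntegral_Ioi_sub (g : ℝ → ℝ → E) (t : ℝ) :
    ∫ s in Iic t, g (t - s) s = ∫ r in Ioi 0, g r (t - r) := by
  have h := (Measure.measurePreserving_sub_left volume t).setIntegral_preimage_emb
    (MeasurableEquiv.subLeft t).measurableEmbedding (fun r => g r (t - r)) (Ioi 0)
  rw [preimage_const_sub_Ioi, sub_zero] at h
  simpa only [integral_Iic_eq_integral_Iio, sub_sub_cancel] using h

theorem setIntegral_Ici_eq_setIntegral_Iio_sub (g : ℝ → ℝ → E) (t : ℝ) :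
    ∫ s in Ici t, g (t - s) s = ∫ r in Iio 0, g r (t - r) := by
  have h := (Measure.measurePreserving_sub_left volume t).setIntegral_preimage_emb
    (MeasurableEquiv.subLeft t).measurableEmbedding (fun r => g r (t - r)) (Iio 0)
  rw [preimage_const_sub_Iio, sub_zero] at h
  simpa only [integral_Ici_eq_integral_Ioi, sub_sub_cancel] using h

end Reflection

section Kernel

variable {E F : Type*} [NormedAddCommGroup E] [NormedSpace ℝ E] [NormedAddCommGroup F]
  [NormedSpace ℝ F]
  {K : ℝ → E →L[ℝ] F} {S : Set ℝ} {w : ℝ → ℝ}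

theorem norm_setIntegral_comp_add_sub_le (hS : MeasurableSet S) (hw : IntegrableOn w S)
    (hK : ∀ r ∈ S, ‖K r‖ ≤ w r) {ψ : ℝ → E}
    (hψ : ∀ t, IntegrableOn (fun r => K r (ψ (t - r))) S) {δ σ : ℝ}
    (hσ : ∀ u, ‖ψ (u + σ) - ψ u‖ ≤ δ) (t : ℝ) :
    ‖(∫ r in S, K r (ψ (t + σ - r))) - ∫ r in S, K r (ψ (t - r))‖ ≤ δ * ∫ r in S, w r := by
  rw [← integral_sub (hψ (t + σ)) (hψ t), ← integral_const_mul]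
  refine norm_integral_le_of_norm_le (hw.const_mul δ)
    ((ae_restrict_iff' hS).2 (Filter.Eventually.of_forall fun r hr => ?_))
  have hshift : ‖ψ (t + σ - r) - ψ (t - r)‖ ≤ δ := by
    simpa only [sub_add_eq_add_sub] using hσ (t - r)
  calc ‖K r (ψ (t + σ - r)) - K r (ψ (t - r))‖ = ‖K r (ψ (t + σ - r) - ψ (t - r))‖ := by
        rw [map_sub]
    _ ≤ ‖K r‖ * ‖ψ (t + σ - r) - ψ (t - r)‖ := (K r).le_opNorm _
    _ ≤ w r * δ := mul_le_mul (hK r hr) hshift (norm_nonneg _) ((norm_nonneg _).trans (hK r hr))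
    _ = δ * w r := mul_comm _ _

theorem continuous_setIntegral_comp_sub (hS : MeasurableSet S) (hw : IntegrableOn w S)
    (hK : ∀ r ∈ S, ‖K r‖ ≤ w r) (ψ : BoundedContinuousFunction ℝ E)
    (hψ : ∀ t, IntegrableOn (fun r => K r (ψ (t - r))) S) :
    Continuous fun t => ∫ r in S, K r (ψ (t - r)) := by
  refine continuous_of_dominated (fun t => (hψ t).aestronglyMeasurable)
    (fun t => (ae_restrict_iff' hS).2 (Filter.Eventually.of_forall fun r hr => ?_))
    (hw.mul_const ‖ψ‖) (Filter.Eventually.of_forall fun r => by fun_prop)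
  calc ‖K r (ψ (t - r))‖ ≤ ‖K r‖ * ‖ψ (t - r)‖ := (K r).le_opNorm _
    _ ≤ w r * ‖ψ‖ :=
      mul_le_mul (hK r hr) (ψ.norm_coe_le_norm _) (norm_nonneg _) ((norm_nonneg _).trans (hK r hr))

end Kernel

theorem integrableOn_exp_neg_mul_mul_rpow_neg {α β : ℝ} (hβ : 0 < β) (hα : α < 1) :
    IntegrableOn (fun r => exp (-β * r) * r ^ (-α)) (Ioi 0) :=
  (integrableOn_rpow_mul_exp_neg_mul_rpow (p := 1) (s := -α) (by linarith) one_pos hβ).congr_fun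
    (fun r _ => by simp only [rpow_one, mul_comm]) measurableSet_Ioi

theorem integrableOn_exp_neg_mul_mul_one_add_rpow_neg {α β : ℝ} (hβ : 0 < β) (hα : α < 1) :
    IntegrableOn (fun r => exp (-β * r) * (1 + r ^ (-α))) (Ioi 0) := by
  simp only [mul_add, mul_one]
  exact (integrableOn_exp_mul_Ioi (neg_neg_of_pos hβ) 0).add
    (integrableOn_exp_neg_mul_mul_rpow_neg hβ hα)

theorem integral_exp_neg_mul_mul_one_add_rpow_neg {α β : ℝ} (hβ : 0 < β) (hα : α < 1) :
    ∫ r in Ioi 0, exp (-β * r) * (1 + r ^ (-α)) = 1 / β + β ^ (α - 1) * Gamma (1 - α) := by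
  have hexp : ∫ r in Ioi 0, exp (-β * r) = 1 / β := by
    rw [integral_exp_mul_Ioi (neg_neg_of_pos hβ), mul_zero, exp_zero, div_neg, neg_div,
      neg_neg]
  have hsing : ∫ r in Ioi 0, exp (-β * r) * r ^ (-α) = β ^ (α - 1) * Gamma (1 - α) := by
    have h := integral_rpow_mul_exp_neg_mul_Ioi (sub_pos.2 hα) hβ
    rw [sub_sub_cancel_left, one_div, inv_rpow hβ.le, ← rpow_neg hβ.le, neg_sub] at h
    rw [← h]
    exact setIntegral_congr_fun measurableSet_Ioi fun r _ => by rw [neg_mul, mul_comm]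
  simp only [mul_add, mul_one]
  rw [integral_add (integrableOn_exp_mul_Ioi (neg_neg_of_pos hβ) 0)
    (integrableOn_exp_neg_mul_mul_rpow_neg hβ hα), hexp, hsing]

theorem integral_exp_mul_Iio_zero {β : ℝ} (hβ : 0 < β) : ∫ r in Iio 0, exp (β * r) = 1 / β := by
  rw [← integral_Iic_eq_integral_Iio, integral_exp_mul_Iic hβ, mul_zero, exp_zero]

theorem dichotomy_integral_almostPeriodic_general {X : Type*} [NormedAddCommGroup X]
    [NormedSpace ℝ X] (T : ℝ → X →L[ℝ] X) (P : X →L[ℝ] X)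
    (M₁ β α : ℝ) (hM : 0 < M₁) (hβ : 0 < β) (hα1 : α < 1)
    (hP : ∀ r : ℝ, r < 0 → ∀ x : X, ‖T r (P x)‖ ≤ M₁ * Real.exp (β * r) * ‖x‖)
    (hQ : ∀ r : ℝ, 0 < r → ∀ x : X,
      ‖T r (x - P x)‖ ≤ M₁ * Real.exp (-β * r) * (1 + r ^ (-α)) * ‖x‖)
    (φ : BoundedContinuousFunction ℝ X) (hφ : AlmostPeriodic ⇑φ)
    (hint1 : ∀ t : ℝ, IntegrableOn (fun s => T (t - s) (φ s - P (φ s))) (Set.Iic t))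
    (hint2 : ∀ t : ℝ, IntegrableOn (fun s => T (t - s) (P (φ s))) (Set.Ici t))
    (F : ℝ → X)
    (hF : ∀ t : ℝ, F t = (∫ s in Set.Iic t, T (t - s) (φ s - P (φ s))) -
        ∫ s in Set.Ici t, T (t - s) (P (φ s))) :
    AlmostPeriodic F ∧
    ∀ δ σ : ℝ, 0 < δ → (∀ t : ℝ, ‖φ (t + σ) - φ t‖ ≤ δ) →
      ∀ t : ℝ, ‖F (t + σ) - F t‖
        ≤ δ * M₁ * (2 / β + β ^ (α - 1) * Real.Gamma (1 - α)) := by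
  set Q : ℝ → X →L[ℝ] X := fun r => T r ∘L (ContinuousLinearMap.id ℝ X - P)
  set R : ℝ → X →L[ℝ] X := fun r => T r ∘L P
  have hFQR (t : ℝ) :
      F t = (∫ r in Ioi 0, Q r (φ (t - r))) - ∫ r in Iio 0, R r (φ (t - r)) := by
    rw [hF, setIntegral_Iic_eq_setIntegral_Ioi_sub (fun r s => T r (φ s - P (φ s))),
      setIntegral_Ici_eq_setIntegral_Iio_sub (fun r s => T r (P (φ s)))]
    rfl
  have hQint (t : ℝ) : IntegrableOn (fun r => Q r (φ (t - r))) (Ioi 0) :=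
    (integrableOn_Iic_iff_integrableOn_Ioi_sub (fun r s => T r (φ s - P (φ s))) t).1 (hint1 t)
  have hRint (t : ℝ) : IntegrableOn (fun r => R r (φ (t - r))) (Iio 0) :=
    (integrableOn_Ici_iff_integrableOn_Iio_sub (fun r s => T r (P (φ s))) t).1 (hint2 t)
  have hQw : ∀ r ∈ Ioi (0 : ℝ), ‖Q r‖ ≤ M₁ * (exp (-β * r) * (1 + r ^ (-α))) :=
    fun r (hr : 0 < r) =>
      (Q r).opNorm_le_bound (by positivity) fun x => (hQ r hr x).trans_eq (by ring)
  have hRw : ∀ r ∈ Iio (0 : ℝ), ‖R r‖ ≤ M₁ * exp (β * r) := fun r hr =>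
    (R r).opNorm_le_bound (by positivity) (hP r hr)
  have hwQ := (integrableOn_exp_neg_mul_mul_one_add_rpow_neg hβ hα1).const_mul M₁
  have hwR := ((integrableOn_exp_mul_Iic hβ 0).mono_set Iio_subset_Iic_self).const_mul M₁
  have hshift (δ σ : ℝ) (hσ : ∀ t, ‖φ (t + σ) - φ t‖ ≤ δ) (t : ℝ) :
      ‖F (t + σ) - F t‖ ≤ δ * (M₁ * (2 / β + β ^ (α - 1) * Gamma (1 - α))) := by
    have hQσ := norm_setIntegral_comp_add_sub_le measurableSet_Ioi hwQ hQw hQint hσ t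
    have hRσ := norm_setIntegral_comp_add_sub_le measurableSet_Iio hwR hRw hRint hσ t
    rw [integral_const_mul, integral_exp_neg_mul_mul_one_add_rpow_neg hβ hα1] at hQσ
    rw [integral_const_mul, integral_exp_mul_Iio_zero hβ] at hRσ
    rw [hFQR, hFQR, sub_sub_sub_comm]
    exact (norm_sub_le _ _).trans ((add_le_add hQσ hRσ).trans_eq (by ring))
  have hFc : Continuous F := by
    rw [funext hFQR]
    exact (continuous_setIntegral_comp_sub measurableSet_Ioi hwQ hQw φ hQint).sub
      (continuous_setIntegral_comp_sub measurableSet_Iio hwR hRw φ hRint)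
  exact ⟨hφ.of_norm_shift_sub_le hFc (by positivity) hshift,
    fun δ σ _ hσ t => (hshift δ σ hσ t).trans_eq (mul_assoc _ _ _).symm⟩

theorem dichotomy_integral_almostPeriodic {X : Type*} [NormedAddCommGroup X]
    [NormedSpace ℝ X] [CompleteSpace X] (T : ℝ → X →L[ℝ] X) (P : X →L[ℝ] X)
    (M₁ β α : ℝ) (hM : 0 < M₁) (hβ : 0 < β) (hα0 : 0 ≤ α) (hα1 : α < 1)
    (hTc : ∀ x : X, Continuous fun r : ℝ => T r x)
    (hP : ∀ r : ℝ, r < 0 → ∀ x : X, ‖T r (P x)‖ ≤ M₁ * Real.exp (β * r) * ‖x‖)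
    (hQ : ∀ r : ℝ, 0 < r → ∀ x : X,
      ‖T r (x - P x)‖ ≤ M₁ * Real.exp (-β * r) * (1 + r ^ (-α)) * ‖x‖)
    (φ : BoundedContinuousFunction ℝ X) (hφ : AlmostPeriodic ⇑φ)
    (hint1 : ∀ t : ℝ, IntegrableOn (fun s => T (t - s) (φ s - P (φ s))) (Set.Iic t))
    (hint2 : ∀ t : ℝ, IntegrableOn (fun s => T (t - s) (P (φ s))) (Set.Ici t))
    (F : ℝ → X)
    (hF : ∀ t : ℝ, F t = (∫ s in Set.Iic t, T (t - s) (φ s - P (φ s))) -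
        ∫ s in Set.Ici t, T (t - s) (P (φ s))) :
    AlmostPeriodic F ∧
    ∀ δ σ : ℝ, 0 < δ → (∀ t : ℝ, ‖φ (t + σ) - φ t‖ ≤ δ) →
      ∀ t : ℝ, ‖F (t + σ) - F t‖
        ≤ δ * M₁ * (2 / β + β ^ (α - 1) * Real.Gamma (1 - α)) :=
  dichotomy_integral_almostPeriodic_general T P M₁ β α hM hβ hα1 hP hQ φ hφ hint1 hint2 F hF
end

section
/- Suppose x : ℝ → X is almost periodic and φ : ℝ → X is a function with ‖x(t) − φ(t)‖ → 0 as t → +∞, and suppose φ(t) ∈ B̄(x₀*, δ) for all t ∈ ℝ. Then x(t) ∈ B̄(x₀*, δ) for all t ∈ ℝ; i.e., sup_t ‖x(t) − x₀*‖ ≤ δ. -/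
open MeasureTheory

theorem ap_stays_in_ball {X : Type*} [NormedAddCommGroup X] [NormedSpace ℝ X]
    [CompleteSpace X] (x : ℝ → X) (φ : ℝ → X) (x₀ : X) (δ : ℝ) (hδ : 0 < δ)
    (hx : AlmostPeriodic x)
    (hlim : Filter.Tendsto (fun t => ‖x t - φ t‖) Filter.atTop (nhds 0))
    (hφ : ∀ t : ℝ, ‖φ t - x₀‖ ≤ δ) :
    ∀ t : ℝ, ‖x t - x₀‖ ≤ δ := by
  intro t
  by_contra h
  push_neg at h
  set ε := ‖x t - x₀‖ - δ with hε
  have hεpos : 0 < ε := by linarith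
  obtain ⟨l, hl, hap⟩ := hx.2 (ε / 2) (by linarith)
  have := Filter.Tendsto.eventually_lt hlim tendsto_const_nhds (by linarith : (0:ℝ) < ε / 2)
  obtain ⟨A, hA⟩ := Filter.eventually_atTop.mp this
  obtain ⟨s, hs, hsap⟩ := hap (A - t)
  have hts : t + s ≥ A := by linarith [hs.1]
  have h1 : ‖x (t + s) - x t‖ < ε / 2 := hsap t
  have h2 : ‖x (t + s) - φ (t + s)‖ < ε / 2 := hA _ hts
  have h3 : ‖φ (t + s) - x₀‖ ≤ δ := hφ _
  have : ‖x t - x₀‖ ≤ ‖x t - x (t + s)‖ + ‖x (t + s) - φ (t + s)‖ + ‖φ (t + s) - x₀‖ := by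
    have := norm_sub_le_norm_sub_add_norm_sub (x t) (φ (t + s)) x₀
    have := norm_sub_le_norm_sub_add_norm_sub (x t) (x (t + s)) (φ (t + s))
    linarith
  rw [norm_sub_rev] at h1
  linarith
end

section
/- Let A generate operators e^{−At} with projection P and dichotomy constants M, β > 0: e^{−At}P = P e^{−At} for t ≥ 0, ‖e^{−At}Px‖ ≤ M e^{βt}‖x‖ for t ≤ 0, and ‖e^{−At}(I−P)x‖ ≤ M e^{−βt}‖x‖ for t ≥ 0. If y : ℝ → X is a bounded mild solution of y' + Ay = φ(t) with φ bounded continuous, meaning y(t) = e^{−A(t−τ)}y(τ) + ∫_τ^t e^{−A(t−s)}φ(s) ds for all τ ≤ t, then Py(t) = −∫_t^∞ e^{−A(t−s)}Pφ(s) ds and (I−P)y(t) = ∫_{−∞}^t e^{−A(t−s)}(I−P)φ(s) ds for all t ∈ ℝ. -/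
/-!
Both `P` and `I - P` commute with the evolution, so applying them to the variation of constants
formula splits `y` into two mild solutions. For `(I - P) y`, let the initial time `τ → -∞`: the
term `T (t - τ) ((I - P) y τ)` decays like `e^{-β (t - τ)}` since `y` is bounded. For `P y`,
run the formula backwards from a time `τ > t`, which the group law `T (t - τ) ∘ T (τ - t) = I`
allows, and let `τ → +∞`, where `T (t - τ) (P y τ)` decays like `e^{β (t - τ)}`. The same
exponential bounds make the improper integrals converge.
-/

open MeasureTheory Filter Topology Set Real

theorem continuous_uncurry_of_continuous_apply {ι 𝕜 E F : Type*} [TopologicalSpace ι]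
    [WeaklyLocallyCompactSpace ι] [NontriviallyNormedField 𝕜] [NormedAddCommGroup E]
    [NormedSpace 𝕜 E] [CompleteSpace E] [NormedAddCommGroup F] [NormedSpace 𝕜 F]
    (T : ι → E →L[𝕜] F) (hT : ∀ x, Continuous fun i => T i x) :
    Continuous fun p : ι × E => T p.1 p.2 := by
  rw [continuous_iff_continuousAt]
  rintro ⟨i, x⟩
  obtain ⟨K, hK, hKi⟩ := exists_compact_mem_nhds i
  -- Banach–Steinhaus makes `T` uniformly Lipschitz on the compact neighbourhood `K`.
  obtain ⟨C, hC⟩ : ∃ C, ∀ k : K, ‖T k‖ ≤ C :=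
    banach_steinhaus fun x => (hK.exists_bound_of_continuousOn (hT x).continuousOn).imp
      fun C hC k => hC k k.2
  have hLip : ∀ k ∈ K, LipschitzOnWith C.toNNReal (fun x => T k x) univ := fun k hk =>
    ((T k).lipschitz.weaken (by simpa using Real.toNNReal_le_toNNReal (hC ⟨k, hk⟩))).lipschitzOnWith
  exact (continuousOn_prod_of_continuousOn_lipschitzOnWith' (fun p : ι × E => T p.1 p.2) _ hLip
    fun x _ => (hT x).continuousOn).continuousAt (prod_mem_nhds hKi univ_mem)

theorem tendsto_zero_of_norm_le_mul_exp {ι E F : Type*} [SeminormedAddCommGroup E]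
    [SeminormedAddCommGroup F] {l : Filter ι} {u : ι → E} {w : ι → F} {g : ι → ℝ} {M C : ℝ}
    (hg : Tendsto g l atBot) (hw : ∀ i, ‖w i‖ ≤ C)
    (hu : ∀ᶠ i in l, ‖u i‖ ≤ M * exp (g i) * ‖w i‖) : Tendsto u l (𝓝 0) := by
  refine squeeze_zero_norm' hu ?_
  have hexp : Tendsto (fun i => M * exp (g i)) l (𝓝 0) := by
    simpa using (tendsto_exp_atBot.comp hg).const_mul M
  exact hexp.zero_mul_isBoundedUnder_le (isBoundedUnder_of ⟨C, fun i => by simpa using hw i⟩)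

theorem integrableOn_of_norm_le_mul_exp {E F : Type*} [NormedAddCommGroup E]
    [SeminormedAddCommGroup F] {s : Set ℝ} {u : ℝ → E} {w : ℝ → F} {g : ℝ → ℝ} {M C : ℝ}
    (hs : MeasurableSet s) (hg : IntegrableOn (fun x => exp (g x)) s)
    (hu : AEStronglyMeasurable u (volume.restrict s)) (hw : ∀ x, ‖w x‖ ≤ C)
    (hbound : ∀ x ∈ s, ‖u x‖ ≤ M * exp (g x) * ‖w x‖) : IntegrableOn u s := by
  refine Integrable.mono' (hg.const_mul (|M| * C)) hu (ae_restrict_of_forall_mem hs fun x hx => ?_)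
  calc ‖u x‖ ≤ M * exp (g x) * ‖w x‖ := hbound x hx
    _ ≤ |M| * exp (g x) * C := by gcongr; exacts [le_abs_self M, hw x]
    _ = |M| * C * exp (g x) := by ring

section Dichotomy

variable {X : Type*} [NormedAddCommGroup X] [NormedSpace ℝ X] {T : ℝ → X →L[ℝ] X}
  {P : X →L[ℝ] X} {M β C : ℝ} {w : ℝ → X}

theorem tendsto_apply_proj_atTop (hβ : 0 < β)
    (hP : ∀ t ≤ 0, ∀ x, ‖T t (P x)‖ ≤ M * exp (β * t) * ‖x‖) (hw : ∀ s, ‖w s‖ ≤ C) (t : ℝ) :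
    Tendsto (fun τ => T (t - τ) (P (w τ))) atTop (𝓝 0) := by
  have hexp : Tendsto (fun τ => β * (t - τ)) atTop atBot :=
    (tendsto_atBot_add_const_left _ t tendsto_neg_atTop_atBot).const_mul_atBot hβ
  exact tendsto_zero_of_norm_le_mul_exp hexp hw <| (eventually_ge_atTop t).mono fun τ hτ =>
    hP _ (sub_nonpos.2 hτ) _

theorem tendsto_apply_sub_proj_atBot (hβ : 0 < β)
    (hQ : ∀ t, 0 ≤ t → ∀ x, ‖T t (x - P x)‖ ≤ M * exp (-β * t) * ‖x‖) (hw : ∀ s, ‖w s‖ ≤ C)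
    (t : ℝ) : Tendsto (fun τ => T (t - τ) (w τ - P (w τ))) atBot (𝓝 0) := by
  have hexp : Tendsto (fun τ => -β * (t - τ)) atBot atBot :=
    ((tendsto_atBot_add_const_right (f := fun τ => τ) _ (-t) tendsto_id).const_mul_atBot
      hβ).congr fun τ => by ring
  exact tendsto_zero_of_norm_le_mul_exp hexp hw <| (eventually_le_atBot t).mono fun τ hτ =>
    hQ _ (sub_nonneg.2 hτ) _

theorem integrableOn_Ioi_apply_proj (hβ : 0 < β)
    (hP : ∀ t ≤ 0, ∀ x, ‖T t (P x)‖ ≤ M * exp (β * t) * ‖x‖) (hw : ∀ s, ‖w s‖ ≤ C) (t : ℝ)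
    (hmeas : AEStronglyMeasurable (fun s => T (t - s) (P (w s))) (volume.restrict (Ioi t))) :
    IntegrableOn (fun s => T (t - s) (P (w s))) (Ioi t) := by
  have hexp : IntegrableOn (fun s => exp (β * (t - s))) (Ioi t) :=
    IntegrableOn.congr_fun ((exp_neg_integrableOn_Ioi t hβ).const_mul (exp (β * t)))
      (fun s _ => by rw [← exp_add]; ring_nf) measurableSet_Ioi
  exact integrableOn_of_norm_le_mul_exp measurableSet_Ioi hexp hmeas hw fun s hs =>
    hP _ (sub_nonpos.2 hs.le) _

theorem integrableOn_Iic_apply_sub_proj (hβ : 0 < β)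
    (hQ : ∀ t, 0 ≤ t → ∀ x, ‖T t (x - P x)‖ ≤ M * exp (-β * t) * ‖x‖) (hw : ∀ s, ‖w s‖ ≤ C)
    (t : ℝ)
    (hmeas : AEStronglyMeasurable (fun s => T (t - s) (w s - P (w s))) (volume.restrict (Iic t))) :
    IntegrableOn (fun s => T (t - s) (w s - P (w s))) (Iic t) := by
  have hexp : IntegrableOn (fun s => exp (-β * (t - s))) (Iic t) :=
    IntegrableOn.congr_fun ((integrableOn_exp_mul_Iic hβ t).const_mul (exp (-β * t)))
      (fun s _ => by rw [← exp_add]; ring_nf) measurableSet_Iic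
  exact integrableOn_of_norm_le_mul_exp measurableSet_Iic hexp hmeas hw fun s hs =>
    hQ _ (sub_nonneg.2 hs) _

end Dichotomy

section MildSolution

variable {X : Type*} [NormedAddCommGroup X] [NormedSpace ℝ X]
  {T : ℝ → X →L[ℝ] X} {y z f g : ℝ → X}

def IsMildSolution (T : ℝ → X →L[ℝ] X) (y f : ℝ → X) : Prop :=
  ∀ τ t : ℝ, τ ≤ t → y t = T (t - τ) (y τ) + ∫ s in τ..t, T (t - s) (f s)

theorem continuous_apply_sub_apply [CompleteSpace X] (hT : ∀ x, Continuous fun r => T r x)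
    (hf : Continuous f) (t : ℝ) : Continuous fun s => T (t - s) (f s) :=
  (continuous_uncurry_of_continuous_apply T hT).comp
    ((continuous_const.sub continuous_id).prodMk hf)

theorem IsMildSolution.map [CompleteSpace X] (h : IsMildSolution T y f)
    (hT : ∀ x, Continuous fun r => T r x) (hf : Continuous f) (L : X →L[ℝ] X)
    (hL : ∀ r x, T r (L x) = L (T r x)) :
    IsMildSolution T (fun s => L (y s)) (fun s => L (f s)) := by
  intro τ t hτt
  dsimp only
  rw [h τ t hτt, map_add, hL, ← L.intervalIntegral_comp_comm
    ((continuous_apply_sub_apply hT hf t).intervalIntegrable τ t)]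
  simp only [hL]

theorem IsMildSolution.sub [CompleteSpace X] (hy : IsMildSolution T y f)
    (hz : IsMildSolution T z g) (hT : ∀ x, Continuous fun r => T r x) (hf : Continuous f)
    (hg : Continuous g) :
    IsMildSolution T (fun s => y s - z s) (fun s => f s - g s) := by
  intro τ t hτt
  dsimp only
  rw [hy τ t hτt, hz τ t hτt]
  simp only [map_sub]
  rw [intervalIntegral.integral_sub ((continuous_apply_sub_apply hT hf t).intervalIntegrable τ t)
    ((continuous_apply_sub_apply hT hg t).intervalIntegrable τ t)]
  abel

theorem IsMildSolution.eq_sub_integral [CompleteSpace X] (h : IsMildSolution T y f)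
    (hT : ∀ x, Continuous fun r => T r x) (hf : Continuous f)
    (hadd : ∀ a b, T (a + b) = (T a).comp (T b)) (h0 : T 0 = ContinuousLinearMap.id ℝ X)
    {t τ : ℝ} (htτ : t ≤ τ) : y t = T (t - τ) (y τ) - ∫ s in t..τ, T (t - s) (f s) := by
  have hTT : ∀ a b x, T a (T b x) = T (a + b) x := fun a b x => by rw [hadd]; rfl
  rw [h t τ htτ, map_add, hTT, ← (T (t - τ)).intervalIntegral_comp_comm
    ((continuous_apply_sub_apply hT hf τ).intervalIntegrable t τ)]
  simp only [hTT, sub_add_sub_cancel, sub_self, h0, ContinuousLinearMap.id_apply,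
    add_sub_cancel_right]

theorem IsMildSolution.eq_neg_integral_Ici [CompleteSpace X] (h : IsMildSolution T y f)
    (hT : ∀ x, Continuous fun r => T r x) (hf : Continuous f)
    (hadd : ∀ a b, T (a + b) = (T a).comp (T b)) (h0 : T 0 = ContinuousLinearMap.id ℝ X) {t : ℝ}
    (hdecay : Tendsto (fun τ => T (t - τ) (y τ)) atTop (𝓝 0))
    (hint : IntegrableOn (fun s => T (t - s) (f s)) (Ioi t)) :
    y t = -∫ s in Ici t, T (t - s) (f s) := by
  have hlim := hdecay.sub (intervalIntegral_tendsto_integral_Ioi t hint tendsto_id)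
  rw [integral_Ici_eq_integral_Ioi, ← zero_sub]
  refine tendsto_nhds_unique (tendsto_const_nhds.congr' ?_) hlim
  filter_upwards [eventually_ge_atTop t] with τ hτ using h.eq_sub_integral hT hf hadd h0 hτ

theorem IsMildSolution.eq_integral_Iic (h : IsMildSolution T y f) {t : ℝ}
    (hdecay : Tendsto (fun τ => T (t - τ) (y τ)) atBot (𝓝 0))
    (hint : IntegrableOn (fun s => T (t - s) (f s)) (Iic t)) :
    y t = ∫ s in Iic t, T (t - s) (f s) := by
  have hlim := hdecay.add (intervalIntegral_tendsto_integral_Iic t hint tendsto_id)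
  rw [← zero_add (∫ s in Iic t, _)]
  refine tendsto_nhds_unique (tendsto_const_nhds.congr' ?_) hlim
  filter_upwards [eventually_le_atBot t] with τ hτ using h τ t hτ

end MildSolution

theorem bounded_mild_solution_representation_general {X : Type*} [NormedAddCommGroup X]
    [NormedSpace ℝ X] [CompleteSpace X] (T : ℝ → X →L[ℝ] X) (P : X →L[ℝ] X)
    (M β : ℝ) (hβ : 0 < β)
    (hT0 : T 0 = ContinuousLinearMap.id ℝ X)
    (hsemi : ∀ a b : ℝ, T (a + b) = (T a).comp (T b))
    (hcomm : ∀ t : ℝ, (T t).comp P = P.comp (T t))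
    (hTc : ∀ x : X, Continuous fun r : ℝ => T r x)
    (hP : ∀ t : ℝ, t ≤ 0 → ∀ x : X, ‖T t (P x)‖ ≤ M * Real.exp (β * t) * ‖x‖)
    (hQ : ∀ t : ℝ, 0 ≤ t → ∀ x : X, ‖T t (x - P x)‖ ≤ M * Real.exp (-β * t) * ‖x‖)
    (y : ℝ → X) (φ : BoundedContinuousFunction ℝ X) (Cy : ℝ)
    (hy : ∀ t : ℝ, ‖y t‖ ≤ Cy)
    (hmild : ∀ τ t : ℝ, τ ≤ t →
      y t = T (t - τ) (y τ) + ∫ s in τ..t, T (t - s) (φ s)) :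
    ∀ t : ℝ,
      P (y t) = -∫ s in Set.Ici t, T (t - s) (P (φ s)) ∧
      y t - P (y t) = ∫ s in Set.Iic t, T (t - s) (φ s - P (φ s)) := by
  intro t
  have hφ : Continuous φ := φ.continuous
  have hPφ : Continuous fun s => P (φ s) := P.continuous.comp hφ
  have hPy : IsMildSolution T (fun s => P (y s)) (fun s => P (φ s)) :=
    IsMildSolution.map hmild hTc hφ P fun r x => DFunLike.congr_fun (hcomm r) x
  have hQy : IsMildSolution T (fun s => y s - P (y s)) (fun s => φ s - P (φ s)) :=
    IsMildSolution.sub hmild hPy hTc hφ hPφ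
  refine ⟨hPy.eq_neg_integral_Ici hTc hPφ hsemi hT0 (tendsto_apply_proj_atTop hβ hP hy t)
      (integrableOn_Ioi_apply_proj hβ hP φ.norm_coe_le_norm t
        (continuous_apply_sub_apply hTc hPφ t).aestronglyMeasurable),
    hQy.eq_integral_Iic (tendsto_apply_sub_proj_atBot hβ hQ hy t)
      (integrableOn_Iic_apply_sub_proj hβ hQ φ.norm_coe_le_norm t
        (continuous_apply_sub_apply hTc (hφ.sub hPφ) t).aestronglyMeasurable)⟩

theorem bounded_mild_solution_representation {X : Type*} [NormedAddCommGroup X]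
    [NormedSpace ℝ X] [CompleteSpace X] (T : ℝ → X →L[ℝ] X) (P : X →L[ℝ] X)
    (M β : ℝ) (hM : 0 < M) (hβ : 0 < β)
    (hproj : P.comp P = P)
    (hT0 : T 0 = ContinuousLinearMap.id ℝ X)
    (hsemi : ∀ a b : ℝ, T (a + b) = (T a).comp (T b))
    (hcomm : ∀ t : ℝ, (T t).comp P = P.comp (T t))
    (hTc : ∀ x : X, Continuous fun r : ℝ => T r x)
    (hP : ∀ t : ℝ, t ≤ 0 → ∀ x : X, ‖T t (P x)‖ ≤ M * Real.exp (β * t) * ‖x‖)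
    (hQ : ∀ t : ℝ, 0 ≤ t → ∀ x : X, ‖T t (x - P x)‖ ≤ M * Real.exp (-β * t) * ‖x‖)
    (y : ℝ → X) (φ : BoundedContinuousFunction ℝ X) (Cy : ℝ)
    (hy : ∀ t : ℝ, ‖y t‖ ≤ Cy) (hyc : Continuous y)
    (hmild : ∀ τ t : ℝ, τ ≤ t →
      y t = T (t - τ) (y τ) + ∫ s in τ..t, T (t - s) (φ s)) :
    ∀ t : ℝ,
      P (y t) = -∫ s in Set.Ici t, T (t - s) (P (φ s)) ∧
      y t - P (y t) = ∫ s in Set.Iic t, T (t - s) (φ s - P (φ s)) :=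
  bounded_mild_solution_representation_general T P M β hβ hT0 hsemi hcomm hTc hP hQ y φ Cy hy hmild
end
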